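/- Zinkevich-style regret bound for online gradient descent with varying step sizes: suppose x(k+1) = Π_𝒳(x(k) − α(k)∇f_k(x(k))) with projection onto a closed convex set 𝒳 of diameter D, each f_k convex and differentiable with ‖∇f_k(x)‖ ≤ G on 𝒳, and α(k) > 0 nonincreasing. Then Σ_{k=1}^K (f_k(x(k)) − f_k(x*)) ≤ D²/(2α(K)) + (G²/2) Σ_{k=1}^K α(k) for any x* ∈ 𝒳. -/

import Mathlib

/-!
Convexity bounds the regret of round `k` by `⟪∇f_k(x_k), x_k - x*⟫`. Since `x_{k+1}` is the
projection of `x_k - α_k ∇f_k(x_k)` onto the convex set `𝒳 ∋ x*`, it is at least as close to `x*`,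
and expanding the square gives
`⟪∇f_k(x_k), x_k - x*⟫ ≤ (‖x_k - x*‖² - ‖x_{k+1} - x*‖²) / (2α_k) + α_k ‖∇f_k(x_k)‖² / 2`.
Summing, the first terms telescope up to the weights `1/(2α_k)`; as these weights increase and
`‖x_k - x*‖² ≤ D²`, summation by parts bounds them by `D² / (2α_K)`.
-/

open Finset
open scoped RealInnerProductSpace

theorem ConvexOn.add_fderiv_sub_le {E : Type*} [NormedAddCommGroup E] [NormedSpace ℝ E]
    {s : Set E} {f : E → ℝ} {f' : E →L[ℝ] ℝ} {a b : E}
    (hf : ConvexOn ℝ s f) (ha : a ∈ s) (hb : b ∈ s) (hf' : HasFDerivAt f f' a) :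
    f a + f' (b - a) ≤ f b := by
  let φ : ℝ → ℝ := f ∘ AffineMap.lineMap a b
  have hφ : ConvexOn ℝ (AffineMap.lineMap a b ⁻¹' s) φ := hf.comp_affineMap _
  have hφ' : HasDerivAt φ (f' (b - a)) 0 := by
    have hf'0 : HasFDerivAt f f' (AffineMap.lineMap a b (0 : ℝ)) := by simpa using hf'
    exact hf'0.comp_hasDerivAt 0 AffineMap.hasDerivAt_lineMap
  have hslope := hφ.le_slope_of_hasDerivAt (by simpa using ha) (by simpa using hb) one_pos hφ'
  simp only [slope_def_field, φ, Function.comp_apply, AffineMap.lineMap_apply_one,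
    AffineMap.lineMap_apply_zero, sub_zero, div_one] at hslope
  linarith

section

variable {E : Type*} [NormedAddCommGroup E] [InnerProductSpace ℝ E]

theorem ConvexOn.sub_le_inner_gradient [CompleteSpace E] {s : Set E} {f : E → ℝ} {g a b : E}
    (hf : ConvexOn ℝ s f) (ha : a ∈ s) (hb : b ∈ s) (hg : HasGradientAt f g a) :
    f a - f b ≤ ⟪g, a - b⟫ := by
  have := hf.add_fderiv_sub_le ha hb hg.hasFDerivAt
  rw [InnerProductSpace.toDual_apply_apply, ← neg_sub, inner_neg_right] at this
  linarith

theorem norm_sub_le_of_forall_norm_sub_le {K : Set E} (hK : Convex ℝ K) {u v w : E}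
    (hv : v ∈ K) (hw : w ∈ K) (hmin : ∀ z ∈ K, ‖v - u‖ ≤ ‖z - u‖) : ‖v - w‖ ≤ ‖u - w‖ := by
  have : Nonempty K := ⟨⟨v, hv⟩⟩
  have hinf : ‖u - v‖ = ⨅ z : K, ‖u - z‖ := by
    refine le_antisymm (le_ciInf fun z => ?_) (ciInf_le ⟨0, ?_⟩ (⟨v, hv⟩ : K))
    · simpa only [norm_sub_rev u] using hmin z z.2
    · rintro _ ⟨z, rfl⟩
      exact norm_nonneg _
  have hobtuse : ⟪u - v, w - v⟫ ≤ 0 := (norm_eq_iInf_iff_real_inner_le_zero hK hv).1 hinf w hw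
  have hexpand : ‖u - w‖ ^ 2 = ‖u - v‖ ^ 2 - 2 * ⟪u - v, w - v⟫ + ‖w - v‖ ^ 2 := by
    rw [← norm_sub_sq_real, sub_sub_sub_cancel_right]
  rw [norm_sub_rev v w]
  exact pow_le_pow_iff_left₀ (norm_nonneg _) (norm_nonneg _) two_ne_zero |>.1
    (by nlinarith [sq_nonneg ‖u - v‖])

theorem inner_le_of_norm_sub_le_norm_sub_smul {x x' z g : E} {a : ℝ} (ha : 0 < a)
    (hcloser : ‖x' - z‖ ≤ ‖x - a • g - z‖) :
    ⟪g, x - z⟫ ≤ (‖x - z‖ ^ 2 - ‖x' - z‖ ^ 2) / (2 * a) + a / 2 * ‖g‖ ^ 2 := by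
  have hexpand : ‖x - a • g - z‖ ^ 2 = ‖x - z‖ ^ 2 - 2 * a * ⟪g, x - z⟫ + a ^ 2 * ‖g‖ ^ 2 := by
    rw [sub_right_comm, norm_sub_sq_real, real_inner_smul_right, real_inner_comm, norm_smul,
      Real.norm_of_nonneg ha.le]
    ring
  have hsq := pow_le_pow_left₀ (norm_nonneg _) hcloser 2
  rw [div_add' _ _ _ (by positivity), le_div_iff₀ (by positivity)]
  nlinarith

end

theorem sum_Icc_sub_div_le {A η : ℕ → ℝ} {B : ℝ} (hη : ∀ k, 0 < η k)
    (hη_anti : ∀ k, η (k + 1) ≤ η k) (hA : ∀ k, 1 ≤ k → A k ≤ B) (K : ℕ) :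
    ∑ k ∈ Icc 1 K, (A k - A (k + 1)) / η k ≤ (B - A (K + 1)) / η K := by
  induction K with
  | zero => simpa using div_nonneg (sub_nonneg.2 (hA 1 le_rfl)) (hη 0).le
  | succ K ih =>
    have hweight : (B - A (K + 1)) / η K ≤ (B - A (K + 1)) / η (K + 1) :=
      div_le_div_of_nonneg_left (sub_nonneg.2 (hA (K + 1) K.succ_pos)) (hη _) (hη_anti K)
    rw [sum_Icc_succ_top (Nat.succ_pos K)]
    calc _ ≤ (B - A (K + 1)) / η (K + 1) + (A (K + 1) - A (K + 1 + 1)) / η (K + 1) := by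
          gcongr
          exact ih.trans hweight
      _ = (B - A (K + 1 + 1)) / η (K + 1) := by rw [← add_div]; ring_nf

theorem zinkevich_regret_bound_general (n K : ℕ)
    (X : Set (EuclideanSpace ℝ (Fin n)))
    (hXcv : Convex ℝ X)
    (D G : ℝ) (hD : ∀ u ∈ X, ∀ v ∈ X, ‖u - v‖ ≤ D)
    (f : ℕ → EuclideanSpace ℝ (Fin n) → ℝ)
    (hconv : ∀ k, ConvexOn ℝ Set.univ (f k))
    (hdiff : ∀ k, Differentiable ℝ (f k))
    (hG : ∀ k, ∀ z ∈ X, ‖gradient (f k) z‖ ≤ G)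
    (α : ℕ → ℝ) (hα : ∀ k, 0 < α k) (hmono : ∀ k, α (k + 1) ≤ α k)
    (x : ℕ → EuclideanSpace ℝ (Fin n))
    (hproj : ∀ k, x (k + 1) ∈ X ∧
      ∀ w ∈ X, ‖x (k + 1) - (x k - α k • gradient (f k) (x k))‖ ≤
        ‖w - (x k - α k • gradient (f k) (x k))‖)
    (xstar : EuclideanSpace ℝ (Fin n)) (hxstar : xstar ∈ X) :
    ∑ k ∈ Finset.Icc 1 K, (f k (x k) - f k xstar) ≤
      D ^ 2 / (2 * α K) + G ^ 2 / 2 * ∑ k ∈ Finset.Icc 1 K, α k := by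
  have hmem : ∀ k, 1 ≤ k → x k ∈ X := fun
    | 0, h => absurd h (by decide)
    | j + 1, _ => (hproj j).1
  let A k := ‖x k - xstar‖ ^ 2
  have hstep : ∀ k ∈ Icc 1 K,
      f k (x k) - f k xstar ≤ (A k - A (k + 1)) / (2 * α k) + α k / 2 * G ^ 2 := by
    intro k hk
    calc f k (x k) - f k xstar ≤ ⟪gradient (f k) (x k), x k - xstar⟫ :=
          (hconv k).sub_le_inner_gradient trivial trivial (hdiff k _).hasGradientAt
      _ ≤ (A k - A (k + 1)) / (2 * α k) + α k / 2 * ‖gradient (f k) (x k)‖ ^ 2 :=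
          inner_le_of_norm_sub_le_norm_sub_smul (hα k)
            (norm_sub_le_of_forall_norm_sub_le hXcv (hproj k).1 hxstar (hproj k).2)
      _ ≤ _ := by
          have := hα k
          gcongr
          exact hG k _ (hmem k (mem_Icc.1 hk).1)
  have htelescope := sum_Icc_sub_div_le (A := A) (η := fun k => 2 * α k) (B := D ^ 2)
    (fun k => by linarith [hα k]) (fun k => by linarith [hmono k])
    (fun k hk => pow_le_pow_left₀ (norm_nonneg _) (hD _ (hmem k hk) _ hxstar) 2) K
  have hαK := hα K
  calc _ ≤ ∑ k ∈ Icc 1 K, ((A k - A (k + 1)) / (2 * α k) + α k / 2 * G ^ 2) := sum_le_sum hstep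
    _ = ∑ k ∈ Icc 1 K, (A k - A (k + 1)) / (2 * α k) + G ^ 2 / 2 * ∑ k ∈ Icc 1 K, α k := by
        rw [sum_add_distrib, mul_sum]
        exact congrArg _ (sum_congr rfl fun _ _ => by ring)
    _ ≤ (D ^ 2 - A (K + 1)) / (2 * α K) + G ^ 2 / 2 * ∑ k ∈ Icc 1 K, α k := by gcongr
    _ ≤ _ := by
        gcongr
        exact sub_le_self _ (sq_nonneg _)

theorem zinkevich_regret_bound (n K : ℕ) (hK : 1 ≤ K)
    (X : Set (EuclideanSpace ℝ (Fin n)))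
    (hXne : X.Nonempty) (hXcl : IsClosed X) (hXcv : Convex ℝ X)
    (D G : ℝ) (hD : ∀ u ∈ X, ∀ v ∈ X, ‖u - v‖ ≤ D)
    (f : ℕ → EuclideanSpace ℝ (Fin n) → ℝ)
    (hconv : ∀ k, ConvexOn ℝ Set.univ (f k))
    (hdiff : ∀ k, Differentiable ℝ (f k))
    (hG : ∀ k, ∀ z ∈ X, ‖gradient (f k) z‖ ≤ G)
    (α : ℕ → ℝ) (hα : ∀ k, 0 < α k) (hmono : ∀ k, α (k + 1) ≤ α k)
    (x : ℕ → EuclideanSpace ℝ (Fin n)) (hx1 : x 1 ∈ X)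
    (hproj : ∀ k, x (k + 1) ∈ X ∧
      ∀ w ∈ X, ‖x (k + 1) - (x k - α k • gradient (f k) (x k))‖ ≤
        ‖w - (x k - α k • gradient (f k) (x k))‖)
    (xstar : EuclideanSpace ℝ (Fin n)) (hxstar : xstar ∈ X) :
    ∑ k ∈ Finset.Icc 1 K, (f k (x k) - f k xstar) ≤
      D ^ 2 / (2 * α K) + G ^ 2 / 2 * ∑ k ∈ Finset.Icc 1 K, α k :=
  zinkevich_regret_bound_general n K X hXcv D G hD f hconv hdiff hG α hα hmono x hproj xstar hxstar
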